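/- arXiv:math/0701364 — 2 statements merged into one kernel-verified Lean document; each statement's English description precedes it below -/
import Mathlib

section
/- Let 𝒢 = (G, o, R_1, …, R_n) be a functional Menger system of rank n and let H be a nonempty subset of G. Then H is a stabilizer of 𝒢 if and only if H is a quasi-stable l-unitary normal v-complex with R_i H ⊆ H for every i ∈ {1,…,n}, and for all x, y, u ∈ G, w̄ ∈ G^n and i ∈ {1,…,n}: if x = y[R_1x…R_nx] ∈ C_H[H] and u[w̄|_i y] ∈ H, then u[w̄|_i x] ∈ H, and also (the case of the empty outer symbol) if x = y[R_1x…R_nx] ∈ C_H[H] and y ∈ H then x ∈ H. -/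
universe u

/-- A functional Menger system of rank `n`: an `(n+1)`-ary operation `o`
(written `x[y₁…yₙ]` in the paper) and `n` unary operations `R i`,
satisfying axioms A1–A7. -/
structure MengerSystem (n : ℕ) (G : Type u) where
  o : G → (Fin n → G) → G
  R : Fin n → G → G
  A1 : ∀ (x : G) (y z : Fin n → G),
    o (o x y) z = o x fun i => o (y i) z
  A2 : ∀ x : G, o x (fun i => R i x) = x
  A3 : ∀ (x : G) (u : Fin n → G) (i : Fin n) (z y : G),
    o (o x (Function.update u i z)) (fun j => R j y)
      = o x (Function.update u i (o z fun j => R j y))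
  A4 : ∀ (i : Fin n) (x y : G),
    R i (o x fun j => R j y) = o (R i x) fun j => R j y
  A5 : ∀ (x y z : G),
    o (o x fun j => R j y) (fun j => R j z)
      = o (o x fun j => R j z) (fun j => R j y)
  A6 : ∀ (i k : Fin n) (x : G) (y : Fin n → G),
    R i (o x y) = R i (o (R k x) y)
  A7 : ∀ (i : Fin n) (x : G) (y : Fin n → G),
    o (R i x) y = o (y i) fun j => R j (o x y)

namespace MengerSystem

variable {n : ℕ} {G : Type u}

/-- `T_n(G)`: the least set of transformations of `G` containing the identity and
closed under `t ↦ (x ↦ a[b̄|ᵢ t x])` and `t ↦ (x ↦ Rᵢ (t x))`. -/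
inductive IsTn (M : MengerSystem n G) : (G → G) → Prop
  | id : IsTn M id
  | op (t : G → G) (a : G) (b : Fin n → G) (i : Fin n) :
      IsTn M t → IsTn M fun x => M.o a (Function.update b i (t x))
  | proj (t : G → G) (i : Fin n) :
      IsTn M t → IsTn M fun x => M.R i (t x)

/-- quasi-stable: `x ∈ H → x[x…x] ∈ H`. -/
def QuasiStable (M : MengerSystem n G) (H : Set G) : Prop :=
  ∀ x ∈ H, M.o x (fun _ => x) ∈ H

/-- l-unitary: `x[y…y] ∈ H ∧ y ∈ H → x ∈ H`. -/
def LUnitary (M : MengerSystem n G) (H : Set G) : Prop :=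
  ∀ x y : G, M.o x (fun _ => y) ∈ H → y ∈ H → x ∈ H

/-- normal v-complex: `x, y ∈ H ∧ t x ∈ H → t y ∈ H` for all `t ∈ T_n(G)`. -/
def NormalVComplex (M : MengerSystem n G) (H : Set G) : Prop :=
  ∀ t : G → G, M.IsTn t → ∀ x ∈ H, ∀ y ∈ H, t x ∈ H → t y ∈ H

/-- stable: `x, y₁, …, yₙ ∈ H → x[y₁…yₙ] ∈ H`. -/
def Stable (M : MengerSystem n G) (H : Set G) : Prop :=
  ∀ (x : G) (y : Fin n → G), x ∈ H → (∀ i, y i ∈ H) → M.o x y ∈ H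

/-- v-unitary: `x[y₁…yₙ] ∈ H ∧ y₁, …, yₙ ∈ H → x ∈ H`. -/
def VUnitary (M : MengerSystem n G) (H : Set G) : Prop :=
  ∀ (x : G) (y : Fin n → G), M.o x y ∈ H → (∀ i, y i ∈ H) → x ∈ H

/-- l-ideal: `x[y₁…yₙ] ∈ H` whenever some `yᵢ ∈ H`. -/
def LIdeal (M : MengerSystem n G) (H : Set G) : Prop :=
  ∀ (x : G) (y : Fin n → G), (∃ i, y i ∈ H) → M.o x y ∈ H

/-- the order `x ≤ y ↔ x = y[R₁x…Rₙx]` (the relation ζ). -/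
def le (M : MengerSystem n G) (x y : G) : Prop :=
  x = M.o y fun i => M.R i x

/-- the quasi-order `x ⊏ y ↔ R₁x ≤ R₁y` (the relation χ). -/
def sub (M : MengerSystem n G) [NeZero n] (x y : G) : Prop :=
  M.le (M.R 0 x) (M.R 0 y)

/-- v-regular binary relation. -/
def VRegular (M : MengerSystem n G) (ρ : G → G → Prop) : Prop :=
  ∀ (z : G) (x y : Fin n → G), (∀ i, ρ (x i) (y i)) → ρ (M.o z x) (M.o z y)

end MengerSystem

/-- An `n`-place function on `A`: a partial map from `Aⁿ` to `A`. -/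
def NPlace (n : ℕ) (A : Type u) : Type u := (Fin n → A) → Part A

namespace NPlace

variable {n : ℕ} {A : Type u}

/-- Menger composition `f[g₁…gₙ]` of `n`-place functions. -/
def comp (f : NPlace n A) (g : Fin n → NPlace n A) : NPlace n A :=
  fun a =>
    (⟨∀ i, (g i a).Dom, fun h i => (g i a).get (h i)⟩ : Part (Fin n → A)).bind f

/-- `Rᵢ f`: same domain as `f`, value `(Rᵢ f)(a₁,…,aₙ) = aᵢ`. -/
def Ri (i : Fin n) (f : NPlace n A) : NPlace n A :=
  fun a => (f a).map fun _ => a i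

/-- Set-theoretic intersection of two `n`-place functions (as sets of pairs). -/
def inter (f g : NPlace n A) : NPlace n A :=
  fun a => ⟨(f a).Dom ∧ f a = g a, fun h => (f a).get h.1⟩

end NPlace

/-- A representation of a functional Menger system by `n`-place functions. -/
def MengerSystem.IsRep {n : ℕ} {G : Type u} (M : MengerSystem n G) {A : Type u}
    (P : G → NPlace n A) : Prop :=
  (∀ (x : G) (y : Fin n → G), P (M.o x y) = NPlace.comp (P x) fun i => P (y i)) ∧
  (∀ (i : Fin n) (x : G), P (M.R i x) = NPlace.Ri i (P x))

/-- A nonempty `H ⊆ G` is a stabilizer of `M` if there are a representation `P`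
on some set `A` and a point `a ∈ A` with `H = {g | P g (a,…,a) = a}`. -/
def MengerSystem.IsStabilizer {n : ℕ} {G : Type u} (M : MengerSystem n G)
    (H : Set G) : Prop :=
  ∃ (A : Type u) (P : G → NPlace n A) (a : A),
    M.IsRep P ∧ H = {g : G | a ∈ P g fun _ => a}

/-- The operator `C_H`: `c ∈ C_H(X)` iff there are `a, b, t` with
`(a ≤ b ∨ a, b ∈ H)`, `t a ⊏ c`, `a ∈ X` and `t b ∈ X`. -/
def MengerSystem.CH {n : ℕ} {G : Type u} [NeZero n] (M : MengerSystem n G)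
    (H X : Set G) : Set G :=
  {c | ∃ (a b : G) (t : G → G), M.IsTn t ∧ (M.le a b ∨ (a ∈ H ∧ b ∈ H)) ∧
    M.sub (t a) c ∧ a ∈ X ∧ t b ∈ X}

/-- Iterates `C_H^m(X)`. -/
def MengerSystem.CHiter {n : ℕ} {G : Type u} [NeZero n] (M : MengerSystem n G)
    (H X : Set G) : ℕ → Set G
  | 0 => X
  | m + 1 => M.CH H (M.CHiter H X m)

/-- `C_H[X] = ⋃ₘ C_H^m(X)`. -/
def MengerSystem.CHcl {n : ℕ} {G : Type u} [NeZero n] (M : MengerSystem n G)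
    (H X : Set G) : Set G :=
  ⋃ m : ℕ, M.CHiter H X m

/-!
Sufficiency: identify elements that no `t ∈ T_n(G)` separates by membership in `H` or in `C_H[H]`,
and let `g` act on classes by `(⟦z₁⟧,…,⟦zₙ⟧) ↦ ⟦g[z₁…zₙ]⟧`, defined when `g[z₁…zₙ] ∈ C_H[H]`.
This is a representation because `C_H[H]` is closed upwards under `⊏` and under
`x, y ↦ x[R₁y…Rₙy]`, and because `z[R₁w…Rₙw]` is equivalent to `z` for `w ∈ C_H[H]`; the latter
is where the second form of condition (f-22) enters. The stabilizer of `⟦h⟧` for `h ∈ H` is `H`.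

Necessity: for a representation `P` with base point `a`, the partial value `g ↦ P g (a,…,a)` is
respected by every `t ∈ T_n(G)`, is constant on `H`, does not change along `≤` where it is defined,
and is defined on all of `C_H[H]`; each condition follows from these four facts.
-/

theorem Setoid.rel_of_forall_update {ι α β : Type*} [Fintype ι] [DecidableEq ι] (s : Setoid β)
    (ρ : α → α → Prop) {F : (ι → α) → β}
    (hF : ∀ c i a, ρ (c i) a → s (F c) (F (Function.update c i a)))
    {c c' : ι → α} (h : ∀ i, ρ (c i) (c' i)) : s (F c) (F c') := by
  suffices key : ∀ S : Finset ι, s (F c) (F (S.piecewise c' c)) by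
    simpa only [Finset.piecewise_univ] using key Finset.univ
  intro S
  induction S using Finset.induction_on with
  | empty => simpa only [Finset.piecewise_empty] using s.refl (F c)
  | insert j S hj ih =>
    rw [Finset.piecewise_insert]
    refine s.trans ih (hF _ j _ ?_)
    rw [Finset.piecewise_eq_of_notMem _ _ _ hj]
    exact h j

namespace NPlace

variable {n : ℕ} {A : Type u}

theorem comp_apply_of_eq_some {f : NPlace n A} {g : Fin n → NPlace n A} {x v : Fin n → A}
    (h : ∀ i, g i x = Part.some (v i)) : comp f g x = f v := by
  have hv : (⟨∀ i, (g i x).Dom, fun h i => (g i x).get (h i)⟩ : Part (Fin n → A)) = Part.some v :=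
    Part.eq_some_iff.mpr ⟨fun i => by simp [h i], funext fun i => by simp [h i]⟩
  simp only [comp, hv]
  exact Part.bind_some v f

theorem comp_apply_eq_none {f : NPlace n A} {g : Fin n → NPlace n A} {x : Fin n → A}
    (h : ¬∀ i, (g i x).Dom) : comp f g x = Part.none :=
  Part.eq_none_iff'.mpr fun hd => h hd.1

theorem comp_apply_congr {f : NPlace n A} {g g' : Fin n → NPlace n A} {x : Fin n → A}
    (h : ∀ i, g i x = g' i x) : comp f g x = comp f g' x := by
  unfold comp
  congr 1
  exact Part.ext' (by simp only [h]) fun _ _ => funext fun i => by simp only [h]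

theorem Ri_apply_of_dom {i : Fin n} {f : NPlace n A} {x : Fin n → A} (h : (f x).Dom) :
    Ri i f x = Part.some (x i) :=
  Part.eq_some_iff.mpr (Part.mem_map _ (Part.get_mem h))

end NPlace

namespace MengerSystem

variable {n : ℕ} {G : Type u} (M : MengerSystem n G)

/-- For functions, the restriction of `x` to the domain of `y`. -/
def restrict (x y : G) : G := M.o x fun j => M.R j y

theorem restrict_self (x : G) : M.restrict x x = x := M.A2 x

theorem R_restrict (i : Fin n) (x y : G) : M.R i (M.restrict x y) = M.restrict (M.R i x) y :=
  M.A4 i x y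

theorem restrict_comm (x y z : G) :
    M.restrict (M.restrict x y) z = M.restrict (M.restrict x z) y :=
  M.A5 x y z

theorem restrict_R_self (i : Fin n) (x : G) : M.restrict (M.R i x) x = M.R i x := by
  rw [← R_restrict, restrict_self]

theorem R_R (i k : Fin n) (x : G) : M.R i (M.R k x) = M.R i x := by
  have h := M.A6 i k x fun j => M.R j x
  rwa [M.A2, ← restrict, restrict_R_self, eq_comm] at h

theorem restrict_R (x : G) (k : Fin n) (y : G) : M.restrict x (M.R k y) = M.restrict x y := by
  simp only [restrict, R_R]

theorem restrict_restrict (x y z : G) :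
    M.restrict x (M.restrict y z) = M.restrict (M.restrict x y) z := by
  simp only [restrict, M.A1, M.A4]

theorem restrict_restrict_self (x y : G) :
    M.restrict (M.restrict x y) y = M.restrict x y := by
  rw [← restrict_restrict, restrict_self]

theorem restrict_R_comm (i : Fin n) (x y : G) :
    M.restrict (M.R i x) y = M.restrict (M.R i y) x :=
  calc M.restrict (M.R i x) y = M.restrict (M.R i y) (M.restrict x y) := M.A7 i x _
    _ = M.restrict (M.R i y) x := by
      rw [restrict_restrict, restrict_comm, restrict_R_self]

theorem R_restrict_comm (i : Fin n) (x y : G) :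
    M.R i (M.restrict x y) = M.R i (M.restrict y x) := by
  rw [R_restrict, R_restrict, restrict_R_comm]

theorem R_o (i k : Fin n) (u : G) (v : Fin n → G) :
    M.R i (M.o u v) = M.restrict (M.R i (v k)) (M.o u v) := by
  rw [M.A6 i k u v, M.A7 k u v, M.A4]
  rfl

protected theorem le_refl (x : G) : M.le x x := (M.A2 x).symm

theorem restrict_le (x y : G) : M.le (M.restrict x y) x := by
  show _ = M.restrict x _
  rw [restrict_restrict, restrict_self]

theorem restrict_le_restrict {a b : G} (z : G) (h : M.le a b) :
    M.le (M.restrict z a) (M.restrict z b) := by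
  have h : a = M.restrict b a := h
  calc M.restrict z a = M.restrict z (M.restrict b a) := by rw [← h]
    _ = M.restrict (M.restrict (M.restrict z b) z) a := by
      rw [restrict_restrict, M.restrict_comm z b z, restrict_self]
    _ = M.restrict (M.restrict z b) (M.restrict z a) := by rw [← restrict_restrict]

theorem isTn_o_update (u : G) (w : Fin n → G) (i : Fin n) :
    M.IsTn fun z => M.o u (Function.update w i z) :=
  IsTn.op id u w i IsTn.id

section

variable {M}

theorem IsTn.comp {t f : G → G} (ht : M.IsTn t) (hf : M.IsTn f) : M.IsTn (t ∘ f) := by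
  induction ht with
  | id => exact hf
  | op t a b i _ ih => exact IsTn.op _ a b i ih
  | proj t i _ ih => exact IsTn.proj _ i ih

theorem IsTn.map_restrict {t : G → G} (ht : M.IsTn t) (z w : G) :
    t (M.restrict z w) = M.restrict (t z) w := by
  induction ht with
  | id => rfl
  | op t a b i _ ih =>
    beta_reduce
    rw [ih]
    exact (M.A3 a b i (t z) w).symm
  | proj t i _ ih =>
    beta_reduce
    rw [ih, R_restrict]

end

variable [NeZero n]

theorem sub_iff {x y : G} : M.sub x y ↔ M.R 0 x = M.restrict (M.R 0 y) x := by
  rw [← restrict_R _ _ 0]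
  rfl

theorem sub_of_R_eq {x y : G} (h : M.R 0 x = M.R 0 y) : M.sub x y := by
  unfold sub
  rw [h]
  exact M.le_refl _

theorem sub_refl (x : G) : M.sub x x := M.sub_of_R_eq rfl

theorem le.sub {x y : G} (h : M.le x y) : M.sub x y := by
  rw [sub_iff]
  nth_rewrite 1 [h]
  exact M.R_restrict 0 y x

theorem o_sub (u : G) (v : Fin n → G) (k : Fin n) : M.sub (M.o u v) (v k) :=
  (M.sub_iff).mpr (M.R_o 0 k u v)

/-- `v[R₁w, R₂v, …, Rₙv]`. Unlike `w ↦ v[R₁w…Rₙw]` this is a map in `T_n(G)`, and it has the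
same `R₁` (`R_restrictFirst`). -/
def restrictFirst (v w : G) : G := M.o v (Function.update (fun j => M.R j v) 0 (M.R 0 w))

theorem isTn_restrictFirst (v : G) : M.IsTn (M.restrictFirst v) :=
  IsTn.op _ v _ 0 (IsTn.proj _ 0 IsTn.id)

theorem restrictFirst_self (v : G) : M.restrictFirst v v = v := by
  rw [restrictFirst, Function.update_eq_self, M.A2]

theorem restrict_restrictFirst (v w : G) :
    M.restrict (M.restrictFirst v w) v = M.restrict v w :=
  calc M.restrict (M.restrictFirst v w) v
      = M.o v (Function.update (fun j => M.R j v) 0 (M.restrict (M.R 0 w) v)) := M.A3 _ _ _ _ _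
    _ = M.o v (Function.update (fun j => M.R j v) 0 (M.restrict (M.R 0 v) w)) := by
      rw [restrict_R_comm]
    _ = M.restrict (M.restrictFirst v v) w := (M.A3 _ _ _ _ _).symm
    _ = M.restrict v w := by rw [restrictFirst_self]

theorem R_restrictFirst (v w : G) : M.R 0 (M.restrictFirst v w) = M.R 0 (M.restrict v w) := by
  set u := Function.update (fun j => M.R j v) 0 (M.R 0 w) with hu
  set q := M.restrictFirst v w
  have hu0 : u 0 = M.R 0 w := Function.update_self _ _ _
  have hRu : ∀ j, M.R j (u j) = u j := fun j => by
    rcases eq_or_ne j 0 with rfl | hj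
    · rw [hu0, R_R]
    · rw [hu, Function.update_of_ne hj, R_R]
  have hRq : ∀ j, M.R j q = M.restrict (u j) q := fun j => by
    rw [← hRu j]
    exact M.R_o j j v u
  -- `R₁q` is computed both through `u₁ = R₁w` and, via A7, through `R₁v`
  have hq_w : M.R 0 q = M.restrict (M.R 0 w) q := by rw [hRq, hu0]
  have hv_w : M.restrict (M.R 0 v) q = M.restrict (M.R 0 w) q :=
    calc M.restrict (M.R 0 v) q = M.restrict (M.o (M.R 0 v) u) q := by
          show _ = M.o (M.o _ u) _
          rw [M.A1]
          exact congrArg (M.o _) (funext hRq)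
      _ = M.restrict (M.R 0 w) q := by
          rw [M.A7, ← hu0]
          exact M.restrict_restrict_self (u 0) q
  rw [hq_w, ← hv_w, restrict_R_comm, ← R_restrict, restrict_restrictFirst]

theorem restrictFirst_sub_restrictFirst {p w : G} (v : G) (h : M.sub p w) :
    M.sub (M.restrictFirst v p) (M.restrictFirst v w) := by
  unfold sub
  rw [R_restrictFirst, R_restrictFirst, R_restrict, R_restrict, ← restrict_R _ _ 0 p,
    ← restrict_R _ _ 0 w]
  exact M.restrict_le_restrict _ h

section

variable (H X : Set G)

theorem subset_CH : X ⊆ M.CH H X := fun c hc =>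
  ⟨c, c, id, IsTn.id, Or.inl (M.le_refl c), M.sub_refl c, hc, hc⟩

theorem monotone_CHiter : Monotone (M.CHiter H X) :=
  monotone_nat_of_le_succ fun _ => M.subset_CH H _

theorem CHiter_subset_CHcl (m : ℕ) : M.CHiter H X m ⊆ M.CHcl H X :=
  Set.subset_iUnion (M.CHiter H X) m

theorem subset_CHcl : X ⊆ M.CHcl H X := M.CHiter_subset_CHcl H X 0

theorem CH_CHcl_subset : M.CH H (M.CHcl H X) ⊆ M.CHcl H X := by
  rintro c ⟨a, b, t, ht, hab, hsub, ha, hb⟩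
  obtain ⟨k, hk⟩ := Set.mem_iUnion.mp ha
  obtain ⟨l, hl⟩ := Set.mem_iUnion.mp hb
  refine M.CHiter_subset_CHcl H X (max k l + 1) ⟨a, b, t, ht, hab, hsub, ?_, ?_⟩
  · exact M.monotone_CHiter H X (le_max_left k l) hk
  · exact M.monotone_CHiter H X (le_max_right k l) hl

theorem CHcl_induction {p : G → Prop} (hX : ∀ x ∈ X, p x)
    (hCH : ∀ Y ⊆ M.CHcl H X, (∀ y ∈ Y, p y) → ∀ c ∈ M.CH H Y, p c) :
    ∀ c ∈ M.CHcl H X, p c := by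
  suffices ∀ m, ∀ c ∈ M.CHiter H X m, p c from fun c hc =>
    let ⟨m, hm⟩ := Set.mem_iUnion.mp hc
    this m c hm
  intro m
  induction m with
  | zero => exact hX
  | succ m ih => exact hCH _ (M.CHiter_subset_CHcl H X m) ih

variable {H X}

theorem mem_CHcl_of_sub {x y : G} (hx : x ∈ M.CHcl H X) (h : M.sub x y) : y ∈ M.CHcl H X :=
  M.CH_CHcl_subset H X ⟨x, x, id, IsTn.id, Or.inl (M.le_refl x), h, hx, hx⟩

theorem mem_CHcl_iff_of_R_eq {x y : G} (h : M.R 0 x = M.R 0 y) :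
    x ∈ M.CHcl H X ↔ y ∈ M.CHcl H X :=
  ⟨fun hx => M.mem_CHcl_of_sub hx (M.sub_of_R_eq h),
    fun hy => M.mem_CHcl_of_sub hy (M.sub_of_R_eq h.symm)⟩

theorem restrict_mem_CHcl_of_forall_mem {v : G}
    (h : ∀ w ∈ H, M.restrict v w ∈ M.CHcl H H) :
    ∀ w ∈ M.CHcl H H, M.restrict v w ∈ M.CHcl H H := by
  simp only [← M.mem_CHcl_iff_of_R_eq (M.R_restrictFirst v _)] at h ⊢
  refine M.CHcl_induction H H h fun Y hY ih c ⟨a, b, t, ht, hab, hsub, ha, hb⟩ => ?_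
  exact M.CH_CHcl_subset H H ⟨a, b, M.restrictFirst v ∘ t, (M.isTn_restrictFirst v).comp ht,
    hab, M.restrictFirst_sub_restrictFirst v hsub, hY ha, ih _ hb⟩

theorem restrict_mem_CHcl {v w : G} (hv : v ∈ M.CHcl H H) (hw : w ∈ M.CHcl H H) :
    M.restrict v w ∈ M.CHcl H H := by
  have of_mem_H : ∀ {v}, v ∈ H → ∀ w ∈ M.CHcl H H, M.restrict v w ∈ M.CHcl H H := by
    intro v hv
    refine M.restrict_mem_CHcl_of_forall_mem fun w hw => ?_
    rw [← M.mem_CHcl_iff_of_R_eq (M.R_restrictFirst v w)]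
    refine M.CH_CHcl_subset H H ⟨w, v, M.restrictFirst v, M.isTn_restrictFirst v,
      Or.inr ⟨hw, hv⟩, M.sub_refl _, M.subset_CHcl H H hw, ?_⟩
    rw [restrictFirst_self]
    exact M.subset_CHcl H H hv
  refine M.restrict_mem_CHcl_of_forall_mem (fun w hw => ?_) w hw
  rw [M.mem_CHcl_iff_of_R_eq (M.R_restrict_comm 0 v w)]
  exact of_mem_H hw v hv

end

section

variable (H : Set G)

/-- Membership in `C_H[H]` is recorded too: it is the domain of definition in `canonicalVal`. -/
def stabSetoid : Setoid G where
  r x y := ∀ t, M.IsTn t → (t x ∈ H ↔ t y ∈ H) ∧ (t x ∈ M.CHcl H H ↔ t y ∈ M.CHcl H H)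
  iseqv :=
    { refl := fun _ _ _ => ⟨Iff.rfl, Iff.rfl⟩
      symm := fun h t ht => ⟨(h t ht).1.symm, (h t ht).2.symm⟩
      trans := fun h₁ h₂ t ht => ⟨(h₁ t ht).1.trans (h₂ t ht).1, (h₁ t ht).2.trans (h₂ t ht).2⟩ }

variable {M H}

theorem stabSetoid.map {f : G → G} (hf : M.IsTn f) {x y : G} (h : M.stabSetoid H x y) :
    M.stabSetoid H (f x) (f y) :=
  fun t ht => h (t ∘ f) (ht.comp hf)

theorem stabSetoid.mem_iff {x y : G} (h : M.stabSetoid H x y) : x ∈ H ↔ y ∈ H :=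
  (h id IsTn.id).1

theorem stabSetoid.mem_CHcl_iff {x y : G} (h : M.stabSetoid H x y) :
    x ∈ M.CHcl H H ↔ y ∈ M.CHcl H H :=
  (h id IsTn.id).2

theorem stabSetoid_of_mem (hn : M.NormalVComplex H) {x y : G} (hx : x ∈ H) (hy : y ∈ H) :
    M.stabSetoid H x y := fun t ht =>
  ⟨⟨hn t ht x hx y hy, hn t ht y hy x hx⟩,
    ⟨fun h => M.CH_CHcl_subset H H
        ⟨y, x, t, ht, Or.inr ⟨hy, hx⟩, M.sub_refl _, M.subset_CHcl H H hy, h⟩,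
      fun h => M.CH_CHcl_subset H H
        ⟨x, y, t, ht, Or.inr ⟨hx, hy⟩, M.sub_refl _, M.subset_CHcl H H hx, h⟩⟩⟩

theorem stabSetoid_iff_mem (hn : M.NormalVComplex H) {x h : G} (hh : h ∈ H) :
    M.stabSetoid H x h ↔ x ∈ H :=
  ⟨fun hxh => (stabSetoid.mem_iff hxh).mpr hh, fun hx => stabSetoid_of_mem hn hx hh⟩

theorem vRegular_stabSetoid : M.VRegular (M.stabSetoid H) := fun z _ _ =>
  Setoid.rel_of_forall_update _ _ fun c i _ hc => by
    simpa only [Function.update_eq_self] using stabSetoid.map (M.isTn_o_update z c i) hc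

theorem o_const_mem_iff (hq : M.QuasiStable H) (hl : M.LUnitary H) (hn : M.NormalVComplex H)
    {g k : G} (hk : k ∈ H) : M.o g (fun _ => k) ∈ H ↔ g ∈ H :=
  ⟨fun h => hl g k h hk, fun hg =>
    (stabSetoid.mem_iff (vRegular_stabSetoid g _ _ fun _ => stabSetoid_of_mem hn hg hk)).mp
      (hq g hg)⟩

theorem mem_of_le (hl : M.LUnitary H) (hn : M.NormalVComplex H)
    (hr : ∀ i : Fin n, ∀ x ∈ H, M.R i x ∈ H) {x v : G} (hle : M.le x v) (hx : x ∈ H) : v ∈ H :=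
  hl v x ((stabSetoid.mem_iff
    (vRegular_stabSetoid v _ _ fun i => stabSetoid_of_mem hn (hr i x hx) hx)).mp (hle ▸ hx)) hx

theorem stabSetoid_restrict (hl : M.LUnitary H) (hn : M.NormalVComplex H)
    (hr : ∀ i : Fin n, ∀ x ∈ H, M.R i x ∈ H)
    (h6 : ∀ x y : G, x = M.o y (fun j => M.R j x) → x ∈ M.CHcl H H → y ∈ H → x ∈ H)
    (z : G) {w : G} (hw : w ∈ M.CHcl H H) : M.stabSetoid H (M.restrict z w) z := by
  intro t ht
  rw [ht.map_restrict]
  have hle : M.le (M.restrict (t z) w) (t z) := M.restrict_le (t z) w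
  refine ⟨⟨fun h => mem_of_le hl hn hr hle h, fun h => ?_⟩,
    ⟨fun h => M.mem_CHcl_of_sub h hle.sub, fun h => M.restrict_mem_CHcl h hw⟩⟩
  exact h6 _ _ hle (M.restrict_mem_CHcl (M.subset_CHcl H H h) hw) h

end

section

variable (H : Set G)

def canonicalVal (g : G) (z : Fin n → G) : Part (Quotient (M.stabSetoid H)) :=
  ⟨M.o g z ∈ M.CHcl H H, fun _ => ⟦M.o g z⟧⟩

noncomputable def canonicalRep (g : G) : NPlace n (Quotient (M.stabSetoid H)) :=
  fun xs => M.canonicalVal H g fun i => (xs i).out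

variable {M H}

theorem canonicalVal_eq_some {g : G} {z : Fin n → G} (h : M.o g z ∈ M.CHcl H H) :
    M.canonicalVal H g z = Part.some ⟦M.o g z⟧ :=
  Part.eq_some_iff.mpr ⟨h, rfl⟩

theorem canonicalVal_congr {g : G} {z z' : Fin n → G} (h : ∀ i, M.stabSetoid H (z i) (z' i)) :
    M.canonicalVal H g z = M.canonicalVal H g z' :=
  have hg := vRegular_stabSetoid g z z' h
  Part.ext' (stabSetoid.mem_CHcl_iff hg) fun _ _ => Quotient.sound hg

theorem canonicalRep_apply_mk (g : G) (z : Fin n → G) :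
    M.canonicalRep H g (fun i => ⟦z i⟧) = M.canonicalVal H g z :=
  canonicalVal_congr fun i => Quotient.mk_out (z i)

theorem isRep_canonicalRep (hl : M.LUnitary H) (hn : M.NormalVComplex H)
    (hr : ∀ i : Fin n, ∀ x ∈ H, M.R i x ∈ H)
    (h6 : ∀ x y : G, x = M.o y (fun j => M.R j x) → x ∈ M.CHcl H H → y ∈ H → x ∈ H) :
    M.IsRep (M.canonicalRep H) := by
  have mk_surj : ∀ xs : Fin n → Quotient (M.stabSetoid H), ∃ z : Fin n → G,
      xs = fun i => ⟦z i⟧ := fun xs => ⟨fun i => (xs i).out, funext fun i => (xs i).out_eq.symm⟩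
  refine ⟨fun g ys => funext fun xs => ?_, fun i g => funext fun xs => ?_⟩
  · obtain ⟨z, rfl⟩ := mk_surj xs
    rw [canonicalRep_apply_mk]
    by_cases hz : ∀ i, M.o (ys i) z ∈ M.CHcl H H
    · rw [NPlace.comp_apply_of_eq_some fun i => (canonicalRep_apply_mk _ z).trans
        (canonicalVal_eq_some (hz i)), canonicalRep_apply_mk]
      unfold canonicalVal
      rw [M.A1]
    · rw [NPlace.comp_apply_eq_none (by simp only [canonicalRep_apply_mk]; exact hz)]
      refine Part.eq_none_iff'.mpr fun hD => hz fun i =>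
        M.mem_CHcl_of_sub ?_ (M.o_sub g (fun i => M.o (ys i) z) i)
      rw [← M.A1]
      exact hD
  · obtain ⟨z, rfl⟩ := mk_surj xs
    show _ = (M.canonicalRep H g _).map _
    rw [canonicalRep_apply_mk, canonicalRep_apply_mk]
    have hR : M.R 0 (M.o (M.R i g) z) = M.R 0 (M.o g z) := by
      rw [M.A7, ← restrict, R_restrict, ← M.R_o 0 i]
    refine Part.ext' (M.mem_CHcl_iff_of_R_eq hR) fun _ hD => Quotient.sound ?_
    rw [M.A7]
    exact stabSetoid_restrict hl hn hr h6 (z i) hD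

theorem mem_canonicalRep_iff (hq : M.QuasiStable H) (hl : M.LUnitary H)
    (hn : M.NormalVComplex H) {h : G} (hh : h ∈ H) (g : G) :
    ⟦h⟧ ∈ M.canonicalRep H g (fun _ => ⟦h⟧) ↔ g ∈ H := by
  rw [canonicalRep_apply_mk, ← o_const_mem_iff hq hl hn hh]
  refine ⟨fun ⟨_, hg⟩ => (stabSetoid_iff_mem hn hh).mp (Quotient.exact hg), fun hg => ?_⟩
  exact ⟨M.subset_CHcl H H hg, Quotient.sound ((stabSetoid_iff_mem hn hh).mpr hg)⟩

theorem isStabilizer_of (hH : H.Nonempty) (hq : M.QuasiStable H) (hl : M.LUnitary H)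
    (hn : M.NormalVComplex H) (hr : ∀ i : Fin n, ∀ x ∈ H, M.R i x ∈ H)
    (h6 : ∀ x y : G, x = M.o y (fun j => M.R j x) → x ∈ M.CHcl H H → y ∈ H → x ∈ H) :
    M.IsStabilizer H :=
  let ⟨h, hh⟩ := hH
  ⟨_, M.canonicalRep H, ⟦h⟧, isRep_canonicalRep hl hn hr h6,
    Set.ext fun g => (mem_canonicalRep_iff hq hl hn hh g).symm⟩

end

end MengerSystem

namespace MengerSystem.IsRep

variable {n : ℕ} {G : Type u} {M : MengerSystem n G} {A : Type u} {P : G → NPlace n A}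

theorem apply_o_congr (hP : M.IsRep P) (u : G) {c c' : Fin n → G} {xs : Fin n → A}
    (h : ∀ j, P (c j) xs = P (c' j) xs) : P (M.o u c) xs = P (M.o u c') xs := by
  rw [hP.1, hP.1]
  exact NPlace.comp_apply_congr h

theorem apply_eq_of_le (hP : M.IsRep P) {x y : G} {xs : Fin n → A} (hle : M.le x y)
    (hx : (P x xs).Dom) : P x xs = P y xs := by
  conv_lhs => rw [hle, hP.1]
  refine NPlace.comp_apply_of_eq_some fun i => ?_
  rw [hP.2]
  exact NPlace.Ri_apply_of_dom hx

theorem apply_map_eq (hP : M.IsRep P) {x y : G} {xs : Fin n → A} (h : P x xs = P y xs)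
    {t : G → G} (ht : M.IsTn t) : P (t x) xs = P (t y) xs := by
  induction ht with
  | id => exact h
  | op t a b i _ ih =>
    refine hP.apply_o_congr a fun j => ?_
    rcases eq_or_ne j i with rfl | hj
    · simpa only [Function.update_self] using ih
    · simp only [Function.update_of_ne hj]
  | proj t i _ ih =>
    simp only [hP.2, NPlace.Ri, ih]

theorem dom_of_sub [NeZero n] (hP : M.IsRep P) {x y : G} {xs : Fin n → A} (h : M.sub x y)
    (hx : (P x xs).Dom) : (P y xs).Dom := by
  have hR : ∀ z, (P (M.R 0 z) xs).Dom ↔ (P z xs).Dom := fun z => by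
    rw [hP.2]
    exact Iff.rfl
  exact (hR y).mp (hP.apply_eq_of_le h ((hR x).mpr hx) ▸ (hR x).mpr hx)

theorem dom_of_mem_CHcl [NeZero n] (hP : M.IsRep P) {H X : Set G} {xs : Fin n → A}
    (hH : ∀ x ∈ H, ∀ y ∈ H, P x xs = P y xs) (hX : ∀ x ∈ X, (P x xs).Dom) :
    ∀ c ∈ M.CHcl H X, (P c xs).Dom := by
  refine M.CHcl_induction H X hX fun Y _ ih c ⟨a, b, t, ht, hab, hsub, ha, hb⟩ => ?_
  have hPab : P a xs = P b xs := hab.elim (fun hle => hP.apply_eq_of_le hle (ih a ha))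
    fun ⟨ha, hb⟩ => hH a ha b hb
  exact hP.dom_of_sub hsub (hP.apply_map_eq hPab ht ▸ ih _ hb)

theorem apply_o_of_eq_some (hP : M.IsRep P) (x : G) {c : Fin n → G} {xs : Fin n → A}
    (h : ∀ i, P (c i) xs = Part.some (xs i)) : P (M.o x c) xs = P x xs := by
  rw [hP.1]
  exact NPlace.comp_apply_of_eq_some h

theorem quasiStable (hP : M.IsRep P) (a : A) : M.QuasiStable {g | a ∈ P g fun _ => a} :=
  fun x hx => by
    rw [Set.mem_ofPred_eq, hP.apply_o_of_eq_some x fun _ => Part.eq_some_iff.mpr hx]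
    exact hx

theorem lUnitary (hP : M.IsRep P) (a : A) : M.LUnitary {g | a ∈ P g fun _ => a} :=
  fun x _ hxy hy => by
    rwa [Set.mem_ofPred_eq, hP.apply_o_of_eq_some x fun _ => Part.eq_some_iff.mpr hy] at hxy

theorem normalVComplex (hP : M.IsRep P) (a : A) : M.NormalVComplex {g | a ∈ P g fun _ => a} :=
  fun _ ht _ hx _ hy htx => by
    rwa [Set.mem_ofPred_eq,
      ← hP.apply_map_eq ((Part.eq_some_iff.mpr hx).trans (Part.eq_some_iff.mpr hy).symm) ht]

theorem R_mem (hP : M.IsRep P) (a : A) (i : Fin n) :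
    ∀ x ∈ {g | a ∈ P g fun _ => a}, M.R i x ∈ {g | a ∈ P g fun _ => a} := fun _ hx => by
  rw [Set.mem_ofPred_eq, hP.2, NPlace.Ri_apply_of_dom (Part.dom_iff_mem.mpr ⟨a, hx⟩)]
  exact Part.mem_some a

theorem apply_eq_of_le_of_mem_CHcl [NeZero n] (hP : M.IsRep P) (a : A) {x y : G}
    (hle : M.le x y) (hx : x ∈ M.CHcl {g | a ∈ P g fun _ => a} {g | a ∈ P g fun _ => a}) :
    P x (fun _ => a) = P y fun _ => a := by
  refine hP.apply_eq_of_le hle (hP.dom_of_mem_CHcl (fun x hx y hy => ?_) (fun _ hx => ?_) x hx)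
  · exact (Part.eq_some_iff.mpr hx).trans (Part.eq_some_iff.mpr hy).symm
  · exact Part.dom_iff_mem.mpr ⟨a, hx⟩

end MengerSystem.IsRep

/-- **Theorem 2.** A nonempty `H ⊆ G` is a stabilizer of a functional Menger
system of rank `n` iff it is a quasi-stable l-unitary normal v-complex with
`Rᵢ H ⊆ H` satisfying condition (f-22) with `C_H[H]` (including the case with
empty outer symbol). -/
theorem stabilizer_iff_CHcl {n : ℕ} {G : Type u} [NeZero n] (M : MengerSystem n G)
    (H : Set G) (hH : H.Nonempty) :
    M.IsStabilizer H ↔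
      (M.QuasiStable H ∧ M.LUnitary H ∧ M.NormalVComplex H ∧
        (∀ i : Fin n, ∀ x ∈ H, M.R i x ∈ H) ∧
        (∀ (x y u : G) (w : Fin n → G) (i : Fin n),
          x = M.o y (fun j => M.R j x) → x ∈ M.CHcl H H →
          M.o u (Function.update w i y) ∈ H →
          M.o u (Function.update w i x) ∈ H) ∧
        (∀ x y : G, x = M.o y (fun j => M.R j x) → x ∈ M.CHcl H H →
          y ∈ H → x ∈ H)) := by
  refine ⟨?_, fun ⟨hq, hl, hn, hr, _, h6⟩ => MengerSystem.isStabilizer_of hH hq hl hn hr h6⟩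
  rintro ⟨A, P, a, hP, rfl⟩
  refine ⟨hP.quasiStable a, hP.lUnitary a, hP.normalVComplex a, hP.R_mem a, ?_, ?_⟩
  · intro x y u w i hle hx hu
    have hxy := hP.apply_eq_of_le_of_mem_CHcl a hle hx
    rwa [Set.mem_ofPred_eq, hP.apply_map_eq hxy (M.isTn_o_update u w i)]
  · intro x y hle hx hy
    rwa [Set.mem_ofPred_eq, hP.apply_eq_of_le_of_mem_CHcl a hle hx]
end

section
/- Let 𝒢 = (G, o, R_1, …, R_n) be a functional Menger system of rank n, let H ⊆ G be an l-unitary normal v-complex, and let U ⊆ G satisfy H ⊆ U, R_i U ⊆ H and R_i(G∖U) ⊆ G∖U for every i ∈ {1,…,n}. Then for all x, y ∈ G: if x ⊏ y and x ∈ U, then y ∈ U. -/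
universe u

/-!
A normal v-complex lets one replace the arguments of `a[b₁…bₙ] ∈ H` by other elements of `H`,
one position at a time; replacing them all by a single `y ∈ H` and using l-unitarity shows that
an l-unitary normal v-complex is v-unitary. If `x ∈ U` and `x ⊏ y`, then `R₀x ∈ H` is
`(R₀y)[R₁R₀x…RₙR₀x]` with arguments in `H`, so `R₀y ∈ H ⊆ U`, whereas `y ∉ U` would force `R₀y ∉ U`.
-/

namespace MengerSystem

variable {n : ℕ} {G : Type u} {M : MengerSystem n G} {H : Set G}

theorem NormalVComplex.o_update_mem (hnc : M.NormalVComplex H) {a z : G} {b : Fin n → G}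
    {i : Fin n} (hab : M.o a b ∈ H) (hb : b i ∈ H) (hz : z ∈ H) :
    M.o a (Function.update b i z) ∈ H :=
  hnc _ (.op id a b i .id) (b i) hb z hz (by rwa [id, Function.update_eq_self])

theorem NormalVComplex.o_mem_of_o_mem (hnc : M.NormalVComplex H) {a : G} {b c : Fin n → G}
    (hab : M.o a b ∈ H) (hb : ∀ i, b i ∈ H) (hc : ∀ i, c i ∈ H) : M.o a c ∈ H := by
  classical
  have key : ∀ s : Finset (Fin n), M.o a (s.piecewise c b) ∈ H := by
    intro s
    induction s using Finset.induction_on with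
    | empty => rwa [Finset.piecewise_empty]
    | insert i s _ ih =>
      rw [Finset.piecewise_insert]
      exact hnc.o_update_mem ih (s.piecewise_cases c b (· ∈ H) (hc i) (hb i)) (hc i)
  simpa only [Finset.piecewise_univ] using key Finset.univ

theorem LUnitary.vUnitary [NeZero n] (hlu : M.LUnitary H) (hnc : M.NormalVComplex H) :
    M.VUnitary H :=
  fun a b hab hb => hlu a (b 0) (hnc.o_mem_of_o_mem hab hb fun _ => hb 0) (hb 0)

end MengerSystem

/-- Condition (f-5): if `H` is an l-unitary normal v-complex, `H ⊆ U`,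
`Rᵢ U ⊆ H` and `Rᵢ (G∖U) ⊆ G∖U`, then `x ⊏ y ∧ x ∈ U → y ∈ U`. -/
theorem mem_of_sub {n : ℕ} {G : Type u} [NeZero n] (M : MengerSystem n G)
    (H U : Set G) (hlu : M.LUnitary H) (hnc : M.NormalVComplex H)
    (hHU : H ⊆ U) (hRU : ∀ i : Fin n, ∀ x ∈ U, M.R i x ∈ H)
    (hRU' : ∀ i : Fin n, ∀ x ∈ Uᶜ, M.R i x ∈ Uᶜ) :
    ∀ x y : G, M.sub x y → x ∈ U → y ∈ U := by
  intro x y hxy hxU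
  by_contra hyU
  have hRx : M.R 0 x ∈ H := hRU 0 x hxU
  have hRy : M.R 0 y ∈ H :=
    hlu.vUnitary hnc _ _ (hxy ▸ hRx) fun i => hRU i _ (hHU hRx)
  exact hRU' 0 y hyU (hHU hRy)
end
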